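/- arXiv:1409.3801 — 4 statements merged into one kernel-verified Lean document; each statement's English description precedes it below -/
import Mathlib

section
/- Let d, g, l, m, a, b be integers with d ≥ 1, l ≥ 1, g ≥ 0, 1 ≤ a ≤ b, and m ≥ 1. If d·m = a·b and 2g − 2 + l·(m−1) = d·(a+b−4), then l·a < 2·d² + l·d (equivalently, a < 2d²/l + d). -/
/-!
Multiplying the genus formula by `a·d` and substituting `a·b = d·m` gives the identity
`d·m·(l·a - d²) + 2·a·d·g = a·d·(d·a - 4·d + 2 + l)`. If `l·a ≤ d²` there is nothing to prove.
Otherwise `a² ≤ a·b = d·m` turns the identity into `a·(l·a - d²) ≤ d·(d·a - 4·d + 2 + l)`, that is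
`a·(l·a - 2·d²) ≤ d·(l + 2 - 4·d) < a·d·l`, and cancelling `a` gives the bound.
-/

section
variable {R : Type*} [CommRing R] [LinearOrder R] [IsStrictOrderedRing R] {d g l m a b : R}

theorem mul_mul_sub_sq_add_eq (h1 : d * m = a * b)
    (h2 : 2 * g - 2 + l * (m - 1) = d * (a + b - 4)) :
    d * m * (l * a - d ^ 2) + 2 * a * d * g = a * d * (d * a - 4 * d + 2 + l) := by
  linear_combination (a * d) * h2 - d ^ 2 * h1

theorem sq_mul_sub_sq_le (hd : 0 ≤ d) (hg : 0 ≤ g) (ha : 0 ≤ a) (hab : a ≤ b)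
    (hla : d ^ 2 ≤ l * a) (h1 : d * m = a * b)
    (h2 : 2 * g - 2 + l * (m - 1) = d * (a + b - 4)) :
    a ^ 2 * (l * a - d ^ 2) ≤ a * d * (d * a - 4 * d + 2 + l) := by
  have hsq : a ^ 2 ≤ d * m := by
    rw [h1, sq]
    exact mul_le_mul_of_nonneg_left hab ha
  calc a ^ 2 * (l * a - d ^ 2) ≤ d * m * (l * a - d ^ 2) :=
        mul_le_mul_of_nonneg_right hsq (sub_nonneg.mpr hla)
    _ ≤ d * m * (l * a - d ^ 2) + 2 * a * d * g := le_add_of_nonneg_right (by positivity)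
    _ = a * d * (d * a - 4 * d + 2 + l) := mul_mul_sub_sq_add_eq h1 h2

end

theorem stmt_3_general (d g l m a b : ℤ) (hd : 1 ≤ d) (hl : 1 ≤ l) (hg : 0 ≤ g)
    (ha : 1 ≤ a) (hab : a ≤ b)
    (h1 : d * m = a * b)
    (h2 : 2 * g - 2 + l * (m - 1) = d * (a + b - 4)) :
    l * a < 2 * d ^ 2 + l * d := by
  rcases le_or_gt (l * a) (d ^ 2) with hla | hla
  · nlinarith
  have ha0 : 0 < a := by omega
  have hbound : a * (l * a - d ^ 2) ≤ d * (d * a - 4 * d + 2 + l) := by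
    refine le_of_mul_le_mul_left ?_ ha0
    linear_combination sq_mul_sub_sq_le (by omega) hg ha0.le hab hla.le h1 h2
  have hcancel : a * (l * a - 2 * d ^ 2) < a * (l * d) := by
    calc a * (l * a - 2 * d ^ 2) ≤ d * (l + 2 - 4 * d) := by linarith
      _ < l * d := by nlinarith
      _ ≤ a * (l * d) := le_mul_of_one_le_left (by positivity) ha
  linarith [lt_of_mul_lt_mul_left hcancel ha0.le]

/-- Key bound in the case `l > 0` of the proof of Proposition 1.2:
`a < 2d²/l + d`, in the integral form `l·a < 2·d² + l·d`. -/
theorem stmt_3 (d g l m a b : ℤ) (hd : 1 ≤ d) (hl : 1 ≤ l) (hg : 0 ≤ g)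
    (ha : 1 ≤ a) (hab : a ≤ b) (hm : 1 ≤ m)
    (h1 : d * m = a * b)
    (h2 : 2 * g - 2 + l * (m - 1) = d * (a + b - 4)) :
    l * a < 2 * d ^ 2 + l * d :=
  stmt_3_general d g l m a b hd hl hg ha hab h1 h2
end

section
/- Let l, m, a, b be integers with 1 ≤ l ≤ 7, 1 ≤ a ≤ b, m ≥ 1, 4·m = a·b, and −2 + l·(m−1) = 4·(a+b−4). Then (l, a, b, m) is one of the following fifteen quadruples: (7,3,4,3), (6,3,8,6), (6,4,4,4), (5,4,7,7), (3,6,26,39), (2,13,16,52), (2,12,18,54), (2,10,28,70), (2,9,48,108), (1,28,33,231), (1,22,50,275), (1,20,67,335), (1,19,84,399), (1,18,118,531), (1,17,220,935). -/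
/-!
Eliminating `m` through `4m = ab`, the basic relation becomes `l·a·b = 16a + 16b + 4l − 56`.
As `4l < 56`, the right-hand side is below `16(a + b) ≤ 32b`, hence `l·a < 32`. This leaves
finitely many pairs `(l, a)`, and for each of them both relations are linear in `b` and `m`;
`4 ∣ ab` is still needed there, e.g. to exclude `(l, a, b) = (4, 1, 2)`.
-/

theorem mul_mul_eq_of_basic_relation {l m a b : ℤ} (h1 : 4 * m = a * b)
    (h2 : -2 + l * (m - 1) = 4 * (a + b - 4)) :
    l * a * b = 16 * a + 16 * b + 4 * l - 56 := by
  linear_combination 4 * h2 - l * h1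

theorem mul_lt_of_mul_mul_eq {l a b : ℤ} (hl : 0 < l) (hl14 : l < 14) (hab : a ≤ b)
    (h : l * a * b = 16 * a + 16 * b + 4 * l - 56) : l * a < 32 := by
  by_contra! hla
  have hb : 0 < b := by nlinarith
  nlinarith

theorem stmt_6_general (l m a b : ℤ) (hl1 : 1 ≤ l) (hl7 : l ≤ 7)
    (ha : 1 ≤ a) (hab : a ≤ b)
    (h1 : 4 * m = a * b)
    (h2 : -2 + l * (m - 1) = 4 * (a + b - 4)) :
    (l, a, b, m) = (7, 3, 4, 3) ∨
    (l, a, b, m) = (6, 3, 8, 6) ∨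
    (l, a, b, m) = (6, 4, 4, 4) ∨
    (l, a, b, m) = (5, 4, 7, 7) ∨
    (l, a, b, m) = (3, 6, 26, 39) ∨
    (l, a, b, m) = (2, 13, 16, 52) ∨
    (l, a, b, m) = (2, 12, 18, 54) ∨
    (l, a, b, m) = (2, 10, 28, 70) ∨
    (l, a, b, m) = (2, 9, 48, 108) ∨
    (l, a, b, m) = (1, 28, 33, 231) ∨
    (l, a, b, m) = (1, 22, 50, 275) ∨
    (l, a, b, m) = (1, 20, 67, 335) ∨
    (l, a, b, m) = (1, 19, 84, 399) ∨
    (l, a, b, m) = (1, 18, 118, 531) ∨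
    (l, a, b, m) = (1, 17, 220, 935) := by
  have hrel := mul_mul_eq_of_basic_relation h1 h2
  have hla := mul_lt_of_mul_mul_eq (by omega) (by omega) hab hrel
  have ha_le : a ≤ 31 / l := (Int.le_ediv_iff_mul_le (by omega)).2 (by linarith)
  interval_cases l <;> interval_cases a <;> norm_num <;> omega

/-- Numerical content of Lemma 1.3: the fifteen possible types `(l, a, b, m)`
for a smooth rational quartic to be a primitive s.t.c.i. -/
theorem stmt_6 (l m a b : ℤ) (hl1 : 1 ≤ l) (hl7 : l ≤ 7)
    (ha : 1 ≤ a) (hab : a ≤ b) (hm : 1 ≤ m)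
    (h1 : 4 * m = a * b)
    (h2 : -2 + l * (m - 1) = 4 * (a + b - 4)) :
    (l, a, b, m) = (7, 3, 4, 3) ∨
    (l, a, b, m) = (6, 3, 8, 6) ∨
    (l, a, b, m) = (6, 4, 4, 4) ∨
    (l, a, b, m) = (5, 4, 7, 7) ∨
    (l, a, b, m) = (3, 6, 26, 39) ∨
    (l, a, b, m) = (2, 13, 16, 52) ∨
    (l, a, b, m) = (2, 12, 18, 54) ∨
    (l, a, b, m) = (2, 10, 28, 70) ∨
    (l, a, b, m) = (2, 9, 48, 108) ∨
    (l, a, b, m) = (1, 28, 33, 231) ∨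
    (l, a, b, m) = (1, 22, 50, 275) ∨
    (l, a, b, m) = (1, 20, 67, 335) ∨
    (l, a, b, m) = (1, 19, 84, 399) ∨
    (l, a, b, m) = (1, 18, 118, 531) ∨
    (l, a, b, m) = (1, 17, 220, 935) :=
  stmt_6_general l m a b hl1 hl7 ha hab h1 h2
end

section
/- Let α, k, n, l, b, d, A be positive integers with l·b > d², α·k = A + l, (n+1)·(l·b − d²) = α·b·k², and 3·α·n·(n+2) ≤ 2·b·(b−1)²·(n+1). Then 3·(A + l)·(b·A + d²) < 2·b·(l·b − d²)·(b−1)². -/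
/-!
Write `D = l·b − d²`. Since `A + l = α·k` and `b·A + d² = α·b·k − D`, the relation
`(n+1)·D = α·b·k²` collapses the left-hand side to `3·α·D·(n+1−k)`, which is at most `3·α·D·n`.
On the other hand, multiplying Miyaoka's bound by `D/(n+1)` shows that the right-hand side is at
least `3·α·D·n·(n+2)/(n+1) > 3·α·D·n`.
-/

section

variable {R : Type*}

lemma three_mul_add_mul_add_sq_eq [CommRing R] [IsDomain R] {α k n l b d A : R} (hk : k ≠ 0)
    (h1 : α * k = A + l) (h2 : (n + 1) * (l * b - d ^ 2) = α * b * k ^ 2) :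
    3 * (A + l) * (b * A + d ^ 2) = 3 * α * (l * b - d ^ 2) * (n + 1 - k) := by
  refine mul_left_cancel₀ hk ?_
  have hA : A = α * k - l := by linear_combination -h1
  subst hA
  linear_combination (-3 * α * k) * h2

lemma three_mul_mul_sub_lt_of_miyaoka [CommRing R] [LinearOrder R] [IsStrictOrderedRing R]
    {α k n b D : R} (hα : 0 < α) (hk : 1 ≤ k) (hn : 0 < n) (hD : 0 < D)
    (h3 : 3 * (α * n * (n + 2)) ≤ 2 * b * (b - 1) ^ 2 * (n + 1)) :
    3 * α * D * (n + 1 - k) < 2 * b * D * (b - 1) ^ 2 := by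
  have hαD : 0 < 3 * α * D := by positivity
  refine lt_of_mul_lt_mul_left ?_ (by positivity : (0 : R) ≤ n + 1)
  calc (n + 1) * (3 * α * D * (n + 1 - k))
      ≤ 3 * α * D * (n * (n + 1)) := by nlinarith [mul_le_mul_of_nonneg_left hk hαD.le]
    _ < 3 * α * D * (n * (n + 2)) := by gcongr; linarith
    _ = D * (3 * (α * n * (n + 2))) := by ring
    _ ≤ D * (2 * b * (b - 1) ^ 2 * (n + 1)) := by gcongr
    _ = (n + 1) * (2 * b * D * (b - 1) ^ 2) := by ring

end

theorem stmt_10_general (α k n l b d A : ℤ)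
    (hα : 0 < α) (hk : 0 < k) (hn : 0 < n)
    (hlb : l * b > d ^ 2)
    (h1 : α * k = A + l)
    (h2 : (n + 1) * (l * b - d ^ 2) = α * b * k ^ 2)
    (h3 : 3 * (α * n * (n + 2)) ≤ 2 * b * (b - 1) ^ 2 * (n + 1)) :
    3 * (A + l) * (b * A + d ^ 2) < 2 * b * (l * b - d ^ 2) * (b - 1) ^ 2 := by
  rw [three_mul_add_mul_add_sq_eq hk.ne' h1 h2]
  exact three_mul_mul_sub_lt_of_miyaoka hα (by omega) hn (sub_pos.mpr hlb) h3

/-- Derivation of condition (4) of Proposition 3.3 (condition (5) of Theorem 3.4):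
`3·(A + l)·(b·A + d²) < 2·b·(l·b − d²)·(b−1)²`. -/
theorem stmt_10 (α k n l b d A : ℤ)
    (hα : 0 < α) (hk : 0 < k) (hn : 0 < n) (hl : 0 < l) (hb : 0 < b)
    (hd : 0 < d) (hA : 0 < A)
    (hlb : l * b > d ^ 2)
    (h1 : α * k = A + l)
    (h2 : (n + 1) * (l * b - d ^ 2) = α * b * k ^ 2)
    (h3 : 3 * (α * n * (n + 2)) ≤ 2 * b * (b - 1) ^ 2 * (n + 1)) :
    3 * (A + l) * (b * A + d ^ 2) < 2 * b * (l * b - d ^ 2) * (b - 1) ^ 2 :=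
  stmt_10_general α k n l b d A hα hk hn hlb h1 h2 h3
end

section
/- Let d ≥ 3 and g ≥ 0 be integers with 4·g ≤ (d−2)². Then there exist positive integers a, b, l, m, α, n, k with a ≤ b such that, setting A := d·(b−4) − 2·g + 2, the following five conditions all hold: (1) m·d = a·b; (2) 2g − 2 + l·(m−1) = d·(a + b − 4); (3) α·k = A + l; (4) 3·α·n < 2·b·(b−1)²; (5) 3·(A + l)·(b·A + d²) < 2·b·(l·b − d²)·(b−1)². (One may take l = 1, k = 1, n = 1, a = d² + 1, b = d⁴ − 3d² + 3d − 2gd, m = d(a + b − 4) − 2g + 3, α = A + 1.) -/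
/-!
All five conditions are met with `l = k = n = 1`, `a = d² + 1`, `b = d⁴ - 3d² + 3d - 2gd`,
`m = A + d a + 1` and `α = A + 1`: conditions (1)–(3) then hold identically, and
Castelnuovo's bound `4g ≤ (d - 2)²` makes `b ≥ 2d³` so large compared with `d` that
`0 < A < d b`, which is all the two cubic inequalities (4) and (5) need.
-/

section LargeB

variable {d b : ℤ}

lemma two_mul_cube_le_witness {g : ℤ} (hd : 3 ≤ d) (hg : 4 * g ≤ (d - 2) ^ 2) :
    2 * d ^ 3 ≤ d ^ 4 - 3 * d ^ 2 + 3 * d - 2 * g * d := by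
  have hgd : 4 * g * d ≤ (d - 2) ^ 2 * d := by nlinarith
  nlinarith [mul_nonneg (sq_nonneg d) (by linarith : (0 : ℤ) ≤ d - 3)]

lemma fifty_four_le_of_two_mul_cube_le (hd : 3 ≤ d) (hb : 2 * d ^ 3 ≤ b) : 54 ≤ b := by
  have : (27 : ℤ) ≤ d ^ 3 := by
    calc (27 : ℤ) = 3 ^ 3 := by norm_num
      _ ≤ d ^ 3 := by gcongr
  linarith

lemma six_mul_sq_le_of_two_mul_cube_le (hd : 3 ≤ d) (hb : 2 * d ^ 3 ≤ b) : 6 * d ^ 2 ≤ b := by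
  nlinarith [mul_nonneg (sq_nonneg d) (by linarith : (0 : ℤ) ≤ d - 3)]

lemma three_mul_lt_of_le_mul {x : ℤ} (hd : 3 ≤ d) (hb : 2 * d ^ 3 ≤ b) (hx : x ≤ d * b) :
    3 * x < 2 * b * (b - 1) ^ 2 := by
  have hb54 := fifty_four_le_of_two_mul_cube_le hd hb
  have hdb : 3 * d < 2 * (b - 1) ^ 2 := by
    nlinarith [six_mul_sq_le_of_two_mul_cube_le hd hb]
  nlinarith

lemma cubic_lt_of_two_mul_cube_le (hd : 3 ≤ d) (hb : 2 * d ^ 3 ≤ b) :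
    3 * d ^ 2 * b ^ 3 + 3 * d ^ 3 * b < 2 * b * (b - d ^ 2) * (b - 1) ^ 2 := by
  have hb54 := fifty_four_le_of_two_mul_cube_le hd hb
  have hd2 := six_mul_sq_le_of_two_mul_cube_le hd hb
  -- `6 d² ≤ b` and `2 d³ ≤ b` bound the left side by `b³/2 + 3b/2` and the right by `(5/3) b (b-1)²`
  suffices 3 * d ^ 2 * b ^ 2 + 3 * d ^ 3 < 2 * (b - d ^ 2) * (b - 1) ^ 2 by
    have hb0 : 0 < b := by linarith
    nlinarith
  nlinarith [mul_le_mul_of_nonneg_right hd2 (sq_nonneg b),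
    mul_le_mul_of_nonneg_right hd2 (sq_nonneg (b - 1))]

lemma condition_five_of_le_mul {A : ℤ} (hd : 3 ≤ d) (hb : 2 * d ^ 3 ≤ b)
    (hA : 0 < A) (hAb : A + 1 ≤ d * b) :
    3 * (A + 1) * (b * A + d ^ 2) < 2 * b * (1 * b - d ^ 2) * (b - 1) ^ 2 := by
  have hb0 : 0 ≤ b := by linarith [fifty_four_le_of_two_mul_cube_le hd hb]
  calc 3 * (A + 1) * (b * A + d ^ 2) ≤ 3 * (d * b) * (b * (d * b) + d ^ 2) := by
        gcongr; linarith
    _ = 3 * d ^ 2 * b ^ 3 + 3 * d ^ 3 * b := by ring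
    _ < 2 * b * (b - d ^ 2) * (b - 1) ^ 2 := cubic_lt_of_two_mul_cube_le hd hb
    _ = 2 * b * (1 * b - d ^ 2) * (b - 1) ^ 2 := by ring

end LargeB

/-- Remark 3.6 of the paper: for every `(d, g)` with `d ≥ 3`, `g ≥ 0` and
`4g ≤ (d−2)²`, the numerical conditions (1)–(5) of Theorem 3.4 are fulfilled. -/
theorem stmt_14 (d g : ℤ) (hd : 3 ≤ d) (hg : 0 ≤ g)
    (hcast : 4 * g ≤ (d - 2) ^ 2) :
    ∃ a b l m α n k : ℤ,
      0 < a ∧ 0 < b ∧ 0 < l ∧ 0 < m ∧ 0 < α ∧ 0 < n ∧ 0 < k ∧ a ≤ b ∧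
      m * d = a * b ∧
      2 * g - 2 + l * (m - 1) = d * (a + b - 4) ∧
      α * k = (d * (b - 4) - 2 * g + 2) + l ∧
      3 * (α * n) < 2 * b * (b - 1) ^ 2 ∧
      3 * ((d * (b - 4) - 2 * g + 2) + l) * (b * (d * (b - 4) - 2 * g + 2) + d ^ 2)
        < 2 * b * (l * b - d ^ 2) * (b - 1) ^ 2 := by
  set b := d ^ 4 - 3 * d ^ 2 + 3 * d - 2 * g * d
  set A := d * (b - 4) - 2 * g + 2
  have hb : 2 * d ^ 3 ≤ b := two_mul_cube_le_witness hd hcast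
  have hd2 : 6 * d ^ 2 ≤ b := six_mul_sq_le_of_two_mul_cube_le hd hb
  have hA : 0 < A := by nlinarith
  have hAb : A + 1 ≤ d * b := by linarith
  refine ⟨d ^ 2 + 1, b, 1, A + d * (d ^ 2 + 1) + 1, A + 1, 1, 1, by positivity, by linarith,
    one_pos, by nlinarith, by linarith, one_pos, one_pos, by nlinarith, by ring, by ring,
    by ring, ?_, condition_five_of_le_mul hd hb hA hAb⟩
  simpa using three_mul_lt_of_le_mul hd hb hAb
end
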